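/- Fix a multi-index α = (α₁, α₂) ∈ ℕ² with α₁ ≥ 2 and α₂ ≥ 1. Define coefficients v_α = 1, v_{α−δ₁} = −2z₁, v_{α−δ₂} = −z₂, v_{α−δ₁−δ₂} = 2z₁z₂, v_{α−2δ₁} = z₁², v_{α−2δ₁−δ₂} = −z₁²z₂ (all others zero). Then for every multi-index β with |β| ≤ 2, the identity Σ_γ v_γ(z) · ∂^β(z^γ) = 0 holds in ℂ[z₁,z₂]. -/
import Mathlib


open MvPolynomial

/-- The monomial `z^γ = z₁^{γ₁} z₂^{γ₂}`. -/
noncomputable def zpow (γ : ℕ × ℕ) : MvPolynomial (Fin 2) ℂ :=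
  X 0 ^ γ.1 * X 1 ^ γ.2

/-- The partial derivative `∂^β = ∂^{β₁+β₂}/∂z₁^{β₁}∂z₂^{β₂}`. -/
noncomputable def pderivMulti (β : ℕ × ℕ) (p : MvPolynomial (Fin 2) ℂ) :
    MvPolynomial (Fin 2) ℂ :=
  (⇑(pderiv (0 : Fin 2)))^[β.1] ((⇑(pderiv (1 : Fin 2)))^[β.2] p)

private lemma iter_C_mul (i : Fin 2) (k : ℕ) (c : ℂ) (p : MvPolynomial (Fin 2) ℂ) :
    (⇑(pderiv i))^[k] (C c * p) = C c * (⇑(pderiv i))^[k] p := by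
  induction k generalizing p with
  | zero => rfl
  | succ k ih => rw [Function.iterate_succ_apply, pderiv_C_mul, ih,
      Function.iterate_succ_apply]

private lemma iter_mul_const (i : Fin 2) (k : ℕ) (p q : MvPolynomial (Fin 2) ℂ)
    (hp : pderiv i p = 0) :
    (⇑(pderiv i))^[k] (p * q) = p * (⇑(pderiv i))^[k] q := by
  induction k generalizing q with
  | zero => rfl
  | succ k ih => rw [Function.iterate_succ_apply, pderiv_mul, hp, zero_mul, zero_add, ih,
      Function.iterate_succ_apply]

private lemma iter_pd (i : Fin 2) (k : ℕ) : ∀ m : ℕ,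
    (⇑(pderiv i))^[k] ((X i : MvPolynomial (Fin 2) ℂ) ^ m)
      = C ((m.descFactorial k : ℂ)) * X i ^ (m - k) := by
  induction k with
  | zero => intro m; simp
  | succ k ih =>
    intro m
    rw [Function.iterate_succ_apply, pderiv_pow, pderiv_X_self, mul_one]
    cases m with
    | zero =>
      have h0 := iter_C_mul i k 0 1
      simp only [map_zero, zero_mul] at h0
      simpa using h0
    | succ m =>
      have h1 : ((m + 1 : ℕ) : MvPolynomial (Fin 2) ℂ) * X i ^ (m + 1 - 1)
          = C ((m + 1 : ℕ) : ℂ) * X i ^ m := by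
        simp
      rw [h1, iter_C_mul, ih, Nat.succ_descFactorial_succ, Nat.succ_sub_succ,
        Nat.cast_mul, C_mul, mul_assoc]

private lemma pdM (k l m n : ℕ) :
    pderivMulti (k, l) (zpow (m, n))
      = ((m.descFactorial k * n.descFactorial l : ℕ) : MvPolynomial (Fin 2) ℂ)
          * (X 0 ^ (m - k) * X 1 ^ (n - l)) := by
  unfold pderivMulti zpow
  simp only
  rw [iter_mul_const 1 l _ _ (by rw [pderiv_pow, pderiv_X_of_ne (by decide), mul_zero]),
      iter_pd, mul_comm ((X (0 : Fin 2) : MvPolynomial (Fin 2) ℂ) ^ m),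
      iter_mul_const 0 k _ _
        (by rw [pderiv_C_mul, pderiv_pow, pderiv_X_of_ne (by decide), mul_zero, mul_zero]),
      iter_pd]
  simp only [map_natCast]
  push_cast
  ring

theorem stmt_11 (α : ℕ × ℕ) (hα1 : 2 ≤ α.1) (hα2 : 1 ≤ α.2)
    (β : ℕ × ℕ) (hβ : β.1 + β.2 ≤ 2) :
    pderivMulti β (zpow α)
      - 2 * X 0 * pderivMulti β (zpow (α.1 - 1, α.2))
      - X 1 * pderivMulti β (zpow (α.1, α.2 - 1))
      + 2 * X 0 * X 1 * pderivMulti β (zpow (α.1 - 1, α.2 - 1))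
      + X 0 ^ 2 * pderivMulti β (zpow (α.1 - 2, α.2))
      - X 0 ^ 2 * X 1 * pderivMulti β (zpow (α.1 - 2, α.2 - 1)) = 0 := by
  obtain ⟨α1, α2⟩ := α
  obtain ⟨β1, β2⟩ := β
  simp only at hα1 hα2 hβ ⊢
  obtain ⟨a, rfl⟩ : ∃ a, α1 = a + 2 := ⟨α1 - 2, by omega⟩
  obtain ⟨b, rfl⟩ : ∃ b, α2 = b + 1 := ⟨α2 - 1, by omega⟩
  have hb1 : β1 ≤ 2 := by omega
  have hb2 : β2 ≤ 2 := by omega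
  simp only [show a + 2 - 1 = a + 1 from rfl, show a + 2 - 2 = a from rfl,
    show b + 1 - 1 = b from rfl]
  rw [pdM, pdM, pdM, pdM, pdM, pdM]
  interval_cases β1 <;> interval_cases β2 <;>
    first
      | (exfalso; omega)
      | (rcases a with _ | _ | a <;> rcases b with _ | b <;>
          · simp only [Nat.descFactorial]
            push_cast
            ring)
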